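/- arXiv:2408.16758 — 7 statements merged into one kernel-verified Lean document; each statement's English description precedes it below -/
import Mathlib

section
/- Let H be a B_4-semi-saturated 4-uniform hypergraph on n vertices (n ≥ 4). Then fewer than 4 hyperedges of H contain at least 3 vertices of degree one. Consequently 6|E(H)| ≥ 2n - 16, that is, |E(H)| ≥ (n-8)/3. -/
private def hdeg {n : ℕ} (E : Finset (Finset (Fin n))) (v : Fin n) : ℕ :=
  (E.filter (fun f => v ∈ f)).card

/-- A `B₄`-semi-saturated 4-uniform hypergraph on `n ≥ 4` vertices has fewer than 4
hyperedges containing at least 3 vertices of degree one, and consequently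
`6|E(H)| ≥ 2n - 16`. -/
theorem stmt2 (n : ℕ) (hn : 4 ≤ n) (E : Finset (Finset (Fin n)))
    (huniform : ∀ e ∈ E, e.card = 4)
    (hsemisat : ∀ A : Finset (Fin n), A.card = 4 → A ∉ E →
      ∃ e ∈ E, (A ∩ e).card = 1) :
    (E.filter (fun e =>
        3 ≤ (e.filter (fun v => (E.filter (fun f => v ∈ f)).card = 1)).card)).card < 4 ∧
    2 * n ≤ 6 * E.card + 16 := by
  classical
  -- uniqueness of the edge containing a degree-one vertex
  have uniq : ∀ v : Fin n, hdeg E v = 1 → ∀ e ∈ E, v ∈ e → ∀ f ∈ E, v ∈ f → e = f := by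
    intro v hv e he hve f hf hvf
    have h1 : e ∈ E.filter (fun g => v ∈ g) := Finset.mem_filter.2 ⟨he, hve⟩
    have h2 : f ∈ E.filter (fun g => v ∈ g) := Finset.mem_filter.2 ⟨hf, hvf⟩
    exact Finset.card_le_one.1 hv.le e h1 f h2
  -- key claim: no two distinct edges each contain two degree-one vertices
  have key : ∀ e₁ ∈ E, ∀ e₂ ∈ E, e₁ ≠ e₂ →
      2 ≤ (e₁.filter (fun v => hdeg E v = 1)).card →
      2 ≤ (e₂.filter (fun v => hdeg E v = 1)).card → False := by
    intro e₁ he₁ e₂ he₂ hne h1 h2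
    obtain ⟨a, ha, b, hb, hab⟩ := Finset.one_lt_card.1 h1
    obtain ⟨c, hc, g, hg, hcg⟩ := Finset.one_lt_card.1 h2
    obtain ⟨hae, hda⟩ := Finset.mem_filter.1 ha
    obtain ⟨hbe, hdb⟩ := Finset.mem_filter.1 hb
    obtain ⟨hce, hdc⟩ := Finset.mem_filter.1 hc
    obtain ⟨hge, hdg⟩ := Finset.mem_filter.1 hg
    have hane2 : a ∉ e₂ := fun h => hne (uniq a hda e₁ he₁ hae e₂ he₂ h)
    have hbne2 : b ∉ e₂ := fun h => hne (uniq b hdb e₁ he₁ hbe e₂ he₂ h)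
    have hcne1 : c ∉ e₁ := fun h => hne (uniq c hdc e₁ he₁ h e₂ he₂ hce)
    have hgne1 : g ∉ e₁ := fun h => hne (uniq g hdg e₁ he₁ h e₂ he₂ hge)
    have hac : a ≠ c := fun h => hcne1 (h ▸ hae)
    have hag : a ≠ g := fun h => hgne1 (h ▸ hae)
    have hbc : b ≠ c := fun h => hcne1 (h ▸ hbe)
    have hbg : b ≠ g := fun h => hgne1 (h ▸ hbe)
    set A : Finset (Fin n) := {a, b, c, g} with hA
    have hcardA : A.card = 4 := by
      rw [hA]
      rw [Finset.card_insert_of_notMem (by simp [hab, hac, hag]),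
        Finset.card_insert_of_notMem (by simp [hbc, hbg]),
        Finset.card_insert_of_notMem (by simp [hcg]), Finset.card_singleton]
    have haA : a ∈ A := by simp [hA]
    have hbA : b ∈ A := by simp [hA]
    have hcA : c ∈ A := by simp [hA]
    have hgA : g ∈ A := by simp [hA]
    have hAnotE : A ∉ E := by
      intro hAE
      have := uniq a hda e₁ he₁ hae A hAE haA
      exact hcne1 (this ▸ hcA)
    obtain ⟨f, hfE, hf1⟩ := hsemisat A hcardA hAnotE
    obtain ⟨v, hv⟩ := Finset.card_pos.1 (by rw [hf1]; norm_num)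
    obtain ⟨hvA, hvf⟩ := Finset.mem_inter.1 hv
    have hfeq : f = e₁ ∨ f = e₂ := by
      rw [hA] at hvA
      simp only [Finset.mem_insert, Finset.mem_singleton] at hvA
      rcases hvA with rfl | rfl | rfl | rfl
      · exact Or.inl (uniq v hda f hfE hvf e₁ he₁ hae)
      · exact Or.inl (uniq v hdb f hfE hvf e₁ he₁ hbe)
      · exact Or.inr (uniq v hdc f hfE hvf e₂ he₂ hce)
      · exact Or.inr (uniq v hdg f hfE hvf e₂ he₂ hge)
    rcases hfeq with rfl | rfl
    · have hsub : ({a, b} : Finset (Fin n)) ⊆ A ∩ f := by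
        intro x hx
        simp only [Finset.mem_insert, Finset.mem_singleton] at hx
        rcases hx with rfl | rfl
        · exact Finset.mem_inter.2 ⟨haA, hae⟩
        · exact Finset.mem_inter.2 ⟨hbA, hbe⟩
      have := Finset.card_le_card hsub
      rw [Finset.card_pair hab] at this
      omega
    · have hsub : ({c, g} : Finset (Fin n)) ⊆ A ∩ f := by
        intro x hx
        simp only [Finset.mem_insert, Finset.mem_singleton] at hx
        rcases hx with rfl | rfl
        · exact Finset.mem_inter.2 ⟨hcA, hce⟩
        · exact Finset.mem_inter.2 ⟨hgA, hge⟩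
      have := Finset.card_le_card hsub
      rw [Finset.card_pair hcg] at this
      omega
  -- the set of edges with ≥ 3 degree-one vertices has at most one element
  have hS : (E.filter (fun e => 3 ≤ (e.filter (fun v => hdeg E v = 1)).card)).card ≤ 1 := by
    apply Finset.card_le_one.2
    intro x hx y hy
    by_contra hxy
    obtain ⟨hxE, hx3⟩ := Finset.mem_filter.1 hx
    obtain ⟨hyE, hy3⟩ := Finset.mem_filter.1 hy
    exact key x hxE y hyE hxy (by omega) (by omega)
  -- degree sum
  have hsum : ∑ v : Fin n, hdeg E v = 4 * E.card := by
    calc ∑ v : Fin n, hdeg E v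
        = ∑ v : Fin n, ∑ e ∈ E, if v ∈ e then 1 else 0 := by
          refine Finset.sum_congr rfl fun v _ => ?_
          rw [hdeg, Finset.card_filter]
      _ = ∑ e ∈ E, ∑ v : Fin n, if v ∈ e then 1 else 0 := Finset.sum_comm
      _ = ∑ e ∈ E, e.card := by
          refine Finset.sum_congr rfl fun e he => ?_
          rw [Finset.sum_ite_mem]
          simp
      _ = 4 * E.card := by
          rw [Finset.sum_congr rfl huniform, Finset.sum_const, smul_eq_mul, mul_comm]
  set V0 := Finset.univ.filter (fun v : Fin n => hdeg E v = 0) with hV0def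
  set V1 := Finset.univ.filter (fun v : Fin n => hdeg E v = 1) with hV1def
  set V2 := Finset.univ.filter (fun v : Fin n => 2 ≤ hdeg E v) with hV2def
  have hd01 : Disjoint V0 V1 := by
    rw [Finset.disjoint_left]
    intro v h0 h1
    have := (Finset.mem_filter.1 h0).2
    have := (Finset.mem_filter.1 h1).2
    omega
  have hd02 : Disjoint V0 V2 := by
    rw [Finset.disjoint_left]
    intro v h0 h1
    have := (Finset.mem_filter.1 h0).2
    have := (Finset.mem_filter.1 h1).2
    omega
  have hd12 : Disjoint V1 V2 := by
    rw [Finset.disjoint_left]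
    intro v h0 h1
    have := (Finset.mem_filter.1 h0).2
    have := (Finset.mem_filter.1 h1).2
    omega
  have hpart : V0.card + V1.card + V2.card = n := by
    have hunion : V0 ∪ V1 ∪ V2 = Finset.univ := by
      ext v
      simp only [hV0def, hV1def, hV2def, Finset.mem_union, Finset.mem_filter, Finset.mem_univ, true_and, iff_true]
      omega
    have h1 : (V0 ∪ V1 ∪ V2).card = (V0 ∪ V1).card + V2.card :=
      Finset.card_union_of_disjoint (Finset.disjoint_union_left.2 ⟨hd02, hd12⟩)
    have h2 : (V0 ∪ V1).card = V0.card + V1.card := Finset.card_union_of_disjoint hd01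
    rw [hunion, Finset.card_univ, Fintype.card_fin] at h1
    omega
  -- at most 3 vertices of degree 0
  have hV0 : V0.card ≤ 3 := by
    by_contra h
    push_neg at h
    obtain ⟨A, hAsub, hAcard⟩ := Finset.exists_subset_card_eq (show 4 ≤ V0.card by omega)
    have hdegA : ∀ v ∈ A, hdeg E v = 0 := fun v hv => (Finset.mem_filter.1 (hAsub hv)).2
    have hAnotE : A ∉ E := by
      intro hAE
      obtain ⟨v, hv⟩ := Finset.card_pos.1 (by rw [hAcard]; norm_num)
      have hpos : 0 < hdeg E v :=
        Finset.card_pos.2 ⟨A, Finset.mem_filter.2 ⟨hAE, hv⟩⟩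
      have := hdegA v hv
      omega
    obtain ⟨f, hfE, hf1⟩ := hsemisat A hAcard hAnotE
    obtain ⟨v, hv⟩ := Finset.card_pos.1 (by rw [hf1]; norm_num)
    obtain ⟨hvA, hvf⟩ := Finset.mem_inter.1 hv
    have hpos : 0 < hdeg E v := Finset.card_pos.2 ⟨f, Finset.mem_filter.2 ⟨hfE, hvf⟩⟩
    have := hdegA v hvA
    omega
  -- bound on number of degree-one vertices
  have hV1 : V1.card ≤ 2 * E.card + 4 := by
    have hsub : V1 ⊆ E.biUnion (fun e => e.filter (fun v => hdeg E v = 1)) := by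
      intro v hv
      have hv1 : hdeg E v = 1 := (Finset.mem_filter.1 hv).2
      have hne : (E.filter (fun f => v ∈ f)).Nonempty := by
        rw [← Finset.card_pos, ← hdeg, hv1]; norm_num
      obtain ⟨e, he⟩ := hne
      obtain ⟨heE, hve⟩ := Finset.mem_filter.1 he
      exact Finset.mem_biUnion.2 ⟨e, heE, Finset.mem_filter.2 ⟨hve, hv1⟩⟩
    have hbu := Finset.card_biUnion_le
      (s := E) (t := fun e => e.filter (fun v => hdeg E v = 1))
    have hsplit := Finset.sum_filter_add_sum_filter_not E
      (fun e => 3 ≤ (e.filter (fun v => hdeg E v = 1)).card)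
      (fun e => (e.filter (fun v => hdeg E v = 1)).card)
    have hSsum : ∑ e ∈ E.filter (fun e => 3 ≤ (e.filter (fun v => hdeg E v = 1)).card),
        (e.filter (fun v => hdeg E v = 1)).card ≤ 4 := by
      calc ∑ e ∈ E.filter (fun e => 3 ≤ (e.filter (fun v => hdeg E v = 1)).card),
          (e.filter (fun v => hdeg E v = 1)).card
          ≤ (E.filter (fun e => 3 ≤ (e.filter (fun v => hdeg E v = 1)).card)).card • 4 := by
            apply Finset.sum_le_card_nsmul
            intro e he
            have heE := (Finset.mem_filter.1 he).1
            calc (e.filter (fun v => hdeg E v = 1)).card ≤ e.card :=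
                  Finset.card_le_card (Finset.filter_subset _ _)
              _ = 4 := huniform e heE
        _ ≤ 1 • 4 := by exact Nat.mul_le_mul_right 4 hS
        _ = 4 := by norm_num
    have hTsum : ∑ e ∈ E.filter (fun e => ¬ 3 ≤ (e.filter (fun v => hdeg E v = 1)).card),
        (e.filter (fun v => hdeg E v = 1)).card ≤ 2 * E.card := by
      calc ∑ e ∈ E.filter (fun e => ¬ 3 ≤ (e.filter (fun v => hdeg E v = 1)).card),
          (e.filter (fun v => hdeg E v = 1)).card
          ≤ (E.filter (fun e => ¬ 3 ≤ (e.filter (fun v => hdeg E v = 1)).card)).card • 2 := by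
            apply Finset.sum_le_card_nsmul
            intro e he
            have := (Finset.mem_filter.1 he).2
            omega
        _ ≤ E.card • 2 := by
            exact Nat.mul_le_mul_right 2 (Finset.card_le_card (Finset.filter_subset _ _))
        _ = 2 * E.card := by rw [smul_eq_mul, mul_comm]
    have h1 : V1.card ≤ ∑ e ∈ E, (e.filter (fun v => hdeg E v = 1)).card :=
      le_trans (Finset.card_le_card hsub) hbu
    omega
  -- lower bound on the degree sum
  have hlow : V1.card + 2 * V2.card ≤ 4 * E.card := by
    have h1 : V1.card • 1 ≤ ∑ v ∈ V1, hdeg E v := by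
      apply Finset.card_nsmul_le_sum
      intro v hv
      have := (Finset.mem_filter.1 hv).2
      omega
    have h2 : V2.card • 2 ≤ ∑ v ∈ V2, hdeg E v :=
      Finset.card_nsmul_le_sum _ _ _ (fun v hv => (Finset.mem_filter.1 hv).2)
    have h3 : ∑ v ∈ V1 ∪ V2, hdeg E v ≤ ∑ v : Fin n, hdeg E v :=
      Finset.sum_le_sum_of_subset (Finset.subset_univ _)
    rw [Finset.sum_union hd12] at h3
    simp only [smul_eq_mul, mul_one] at h1 h2
    omega
  constructor
  · exact lt_of_le_of_lt hS (by norm_num)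
  · omega
end

section
/- In any B_4-saturated (bow-tie-free and maximal bow-tie-free) 4-uniform hypergraph H, at most one connected component of H contains a pair of twin vertices, where components consisting of a single isolated vertex are excluded. Equivalently: there do not exist two distinct components C_1, C_2 of H, each containing a pair of twin vertices. -/
/-- In any `B₄`-saturated 4-uniform hypergraph, at most one (non-singleton)
connected component contains a pair of twin vertices: if `{a,b}` and `{c,d}` are
twin pairs whose vertices lie in some hyperedge, then `a` and `c` are connected. -/
theorem stmt4 {V : Type*} [Fintype V] [DecidableEq V] (E : Finset (Finset V))
    (huniform : ∀ e ∈ E, e.card = 4)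
    (hfree : ∀ e ∈ E, ∀ f ∈ E, e ≠ f → (e ∩ f).card ≠ 1)
    (hsat : ∀ A : Finset V, A.card = 4 → A ∉ E → ∃ e ∈ E, (A ∩ e).card = 1)
    (a b c d : V) (hab : a ≠ b) (hcd : c ≠ d)
    (htab : ∀ e ∈ E, (a ∈ e ↔ b ∈ e)) (htcd : ∀ e ∈ E, (c ∈ e ↔ d ∈ e))
    (ha : ∃ e ∈ E, a ∈ e) (hc : ∃ e ∈ E, c ∈ e) :
    Relation.ReflTransGen (fun x y => ∃ e ∈ E, x ∈ e ∧ y ∈ e) a c := by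
  obtain ⟨ea, hea, haea⟩ := ha
  obtain ⟨ec, hec, hcec⟩ := hc
  by_cases hac : a = c
  · exact hac ▸ Relation.ReflTransGen.refl
  by_cases had : a = d
  · have : a ∈ ec := by rw [had]; exact (htcd ec hec).mp hcec
    exact Relation.ReflTransGen.single ⟨ec, hec, this, hcec⟩
  by_cases hbc : b = c
  · exact Relation.ReflTransGen.single ⟨ea, hea, haea, hbc ▸ (htab ea hea).mp haea⟩
  by_cases hbd : b = d
  · have hbea : b ∈ ea := (htab ea hea).mp haea
    have : c ∈ ea := (htcd ea hea).mpr (hbd ▸ hbea)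
    exact Relation.ReflTransGen.single ⟨ea, hea, haea, this⟩
  -- all four distinct
  set A : Finset V := {a, b, c, d} with hA
  have hcard : A.card = 4 := by
    rw [hA]
    rw [Finset.card_insert_of_notMem (by simp [hab, hac, had]),
        Finset.card_insert_of_notMem (by simp [hbc, hbd]),
        Finset.card_insert_of_notMem (by simp [hcd])]
    simp
  by_cases hAE : A ∈ E
  · exact Relation.ReflTransGen.single ⟨A, hAE, by simp [hA], by simp [hA]⟩
  · exfalso
    obtain ⟨e, he, h1⟩ := hsat A hcard hAE
    obtain ⟨x, hx⟩ := Finset.card_eq_one.mp h1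
    have hxA : x ∈ A ∩ e := hx ▸ Finset.mem_singleton_self x
    have hxe : x ∈ e := (Finset.mem_inter.mp hxA).2
    have hmem : ∀ y, y ∈ A → y ∈ e → y = x := by
      intro y hyA hye
      have : y ∈ A ∩ e := Finset.mem_inter.mpr ⟨hyA, hye⟩
      simpa [hx] using this
    have hxA' : x = a ∨ x = b ∨ x = c ∨ x = d := by
      have := (Finset.mem_inter.mp hxA).1
      simpa [hA] using this
    rcases hxA' with h | h | h | h
    · have hbe : b ∈ e := (htab e he).mp (h ▸ hxe)
      exact hab (h ▸ (hmem b (by simp [hA]) hbe)).symm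
    · have hae : a ∈ e := (htab e he).mpr (h ▸ hxe)
      exact hab ((hmem a (by simp [hA]) hae).trans h)
    · have hde : d ∈ e := (htcd e he).mp (h ▸ hxe)
      exact hcd (h ▸ (hmem d (by simp [hA]) hde)).symm
    · have hce : c ∈ e := (htcd e he).mpr (h ▸ hxe)
      exact hcd ((hmem c (by simp [hA]) hce).trans h)
end

section
/- Every 4-uniform B_4-saturated hypergraph on 7 vertices has at least 7 hyperedges, i.e., sat_4(7, B_4) ≥ 7. -/
/-! With `n = 2k - 1` points, a `k`-set `A` meeting a `k`-set `e` in a single vertex `v` must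
contain all `k - 1` points outside `e`, so `A = {v} ∪ eᶜ`: each edge forms a bow tie with at
most `k` of the `k`-sets. Saturation makes every non-edge one of these, so
`C(2k - 1, k) ≤ (k + 1) |E|`; for `k = 4` this is `35 ≤ 5 |E|`. -/

open Finset

section BowTie

variable {α : Type*} [Fintype α] [DecidableEq α]

lemma Finset.eq_inter_union_compl_of_card_inter_eq_one {A e : Finset α}
    (hcard : #A + #e = Fintype.card α + 1) (hinter : #(A ∩ e) = 1) : A = A ∩ e ∪ eᶜ := by
  have hsdiff : A \ e = eᶜ := by
    refine eq_of_subset_of_card_le (fun x hx => mem_compl.mpr (mem_sdiff.mp hx).2) ?_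
    have := card_inter_add_card_sdiff A e
    rw [card_compl]
    omega
  rw [← hsdiff, union_comm, sdiff_union_inter]

lemma card_filter_card_inter_eq_one_le {k : ℕ} {e : Finset α}
    (hk : k + #e = Fintype.card α + 1) :
    #{A ∈ powersetCard k univ | #(A ∩ e) = 1} ≤ #e := by
  calc #{A ∈ powersetCard k univ | #(A ∩ e) = 1}
      ≤ #(e.powersetCard 1) := by
        refine card_le_card_of_injOn (· ∩ e) (fun A hA => ?_) (fun A hA B hB hAB => ?_)
        · simp only [coe_filter, mem_powersetCard, subset_univ, true_and, Set.mem_ofPred_eq] at hA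
          exact mem_powersetCard.mpr ⟨inter_subset_right, hA.2⟩
        · simp only [coe_filter, mem_powersetCard, subset_univ, true_and, Set.mem_ofPred_eq]
            at hA hB
          rw [eq_inter_union_compl_of_card_inter_eq_one (by omega) hA.2,
            eq_inter_union_compl_of_card_inter_eq_one (by omega) hB.2]
          exact congrArg (· ∪ eᶜ) hAB
    _ = #e := by simp

theorem choose_le_succ_mul_card_of_saturated {k : ℕ} (hk : 2 * k = Fintype.card α + 1)
    (E : Finset (Finset α)) (huniform : ∀ e ∈ E, #e = k)
    (hsat : ∀ A : Finset α, #A = k → A ∉ E → ∃ e ∈ E, #(A ∩ e) = 1) :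
    (Fintype.card α).choose k ≤ (k + 1) * #E := by
  set T := powersetCard k (univ : Finset α)
  have hedges : #{A ∈ T | A ∈ E} ≤ #E := card_le_card fun A hA => (mem_filter.mp hA).2
  have hnonedges : #{A ∈ T | A ∉ E} ≤ k * #E :=
    calc #{A ∈ T | A ∉ E}
        ≤ #(E.biUnion fun e => {A ∈ T | #(A ∩ e) = 1}) := card_le_card fun A hA => by
          obtain ⟨hAT, hAE⟩ := mem_filter.mp hA
          obtain ⟨e, he, hAe⟩ := hsat A (mem_powersetCard.mp hAT).2 hAE
          exact mem_biUnion.mpr ⟨e, he, mem_filter.mpr ⟨hAT, hAe⟩⟩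
      _ ≤ ∑ e ∈ E, #{A ∈ T | #(A ∩ e) = 1} := card_biUnion_le
      _ ≤ ∑ _e ∈ E, k := sum_le_sum fun e he =>
          huniform e he ▸ card_filter_card_inter_eq_one_le (by rw [huniform e he]; omega)
      _ = k * #E := by rw [sum_const, smul_eq_mul, mul_comm]
  have hsplit := card_filter_add_card_filter_not (s := T) (· ∈ E)
  rw [card_powersetCard, card_univ] at hsplit
  rw [← hsplit]
  linarith

end BowTie

theorem stmt6_general (E : Finset (Finset (Fin 7)))
    (huniform : ∀ e ∈ E, e.card = 4)
    (hsat : ∀ A : Finset (Fin 7), A.card = 4 → A ∉ E → ∃ e ∈ E, (A ∩ e).card = 1) :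
    7 ≤ E.card := by
  have := choose_le_succ_mul_card_of_saturated (by simp) E huniform hsat
  norm_num [Nat.choose] at this
  omega

/-- Every 4-uniform `B₄`-saturated hypergraph on 7 vertices has at least 7
hyperedges: `sat₄(7, B₄) ≥ 7`. -/
theorem stmt6 (E : Finset (Finset (Fin 7)))
    (huniform : ∀ e ∈ E, e.card = 4)
    (hfree : ∀ e ∈ E, ∀ f ∈ E, e ≠ f → (e ∩ f).card ≠ 1)
    (hsat : ∀ A : Finset (Fin 7), A.card = 4 → A ∉ E → ∃ e ∈ E, (A ∩ e).card = 1) :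
    7 ≤ E.card :=
  stmt6_general E huniform hsat
end

section
/- The complement-of-Fano-plane hypergraph FPᶜ, whose hyperedges are the complements in [7] of the 7 lines of the Fano plane, is a 4-uniform B_4-saturated hypergraph on 7 vertices with exactly 7 hyperedges. Hence sat_4(7, B_4) ≤ 7. -/
/-!
Counting ordered pairs of distinct points of `A` line by line gives
`∑ l, t_l (t_l - 1) = |A| (|A| - 1)` with `t_l = |A ∩ l|`. Adding this identity for `A`
and `Aᶜ`, a line meeting both contributes `2`, while the right-hand side
`|A| (|A| - 1) + (7 - |A|) (6 - |A|)` is at least `18 > 7 · 2`. Hence some line lies inside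
`A` or inside `Aᶜ` (the Fano plane is not 2-colourable). For a 4-set `A` that is not the
complement of a line, this gives a line `l ⊆ A`, and then `|A ∩ lᶜ| = 1`. Complements of two
distinct lines meet in `7 - 5 = 2` points.
-/

open Finset

namespace Finset

variable {α : Type*} [DecidableEq α] {L : Finset (Finset α)}

theorem sum_card_inter_mul_pred_of_existsUnique
    (hpoints : ∀ p q : α, p ≠ q → ∃! l, l ∈ L ∧ p ∈ l ∧ q ∈ l) (A : Finset α) :
    ∑ l ∈ L, #(A ∩ l) * (#(A ∩ l) - 1) = #A * (#A - 1) := by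
  have hunion : A.offDiag = L.biUnion fun l => (A ∩ l).offDiag := by
    ext ⟨p, q⟩
    simp only [mem_offDiag, mem_biUnion, mem_inter]
    constructor
    · rintro ⟨hp, hq, hpq⟩
      obtain ⟨l, ⟨hl, hpl, hql⟩, -⟩ := hpoints p q hpq
      exact ⟨l, hl, ⟨hp, hpl⟩, ⟨hq, hql⟩, hpq⟩
    · rintro ⟨l, -, ⟨hp, -⟩, ⟨hq, -⟩, hpq⟩
      exact ⟨hp, hq, hpq⟩
  have hdisj : (L : Set (Finset α)).PairwiseDisjoint fun l => (A ∩ l).offDiag := by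
    intro l hl m hm hlm
    refine disjoint_left.2 fun ⟨p, q⟩ hpl hqm => hlm ?_
    simp only [mem_offDiag, mem_inter] at hpl hqm
    exact (hpoints p q hpl.2.2).unique ⟨hl, hpl.1.2, hpl.2.1.2⟩ ⟨hm, hqm.1.2, hqm.2.1.2⟩
  simpa only [offDiag_card, ← Nat.mul_sub_one] using
    ((congrArg card hunion).trans (card_biUnion hdisj)).symm

end Finset

theorem Fano.exists_subset_or_subset_compl {α : Type*} [Fintype α] [DecidableEq α]
    {L : Finset (Finset α)} (hα : Fintype.card α = 7) (hL7 : #L = 7)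
    (hL3 : ∀ l ∈ L, #l = 3)
    (hpoints : ∀ p q : α, p ≠ q → ∃! l, l ∈ L ∧ p ∈ l ∧ q ∈ l) (A : Finset α) :
    ∃ l ∈ L, l ⊆ A ∨ l ⊆ Aᶜ := by
  by_contra! hsplit
  have hline : ∀ l ∈ L,
      #(A ∩ l) * (#(A ∩ l) - 1) + #(Aᶜ ∩ l) * (#(Aᶜ ∩ l) - 1) = 2 := by
    intro l hl
    have hsum : #(A ∩ l) + #(Aᶜ ∩ l) = 3 := by
      rw [← hL3 l hl, ← card_union_of_disjoint
        (disjoint_compl_right.mono inter_subset_left inter_subset_left),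
        ← union_inter_distrib_right, union_compl, univ_inter]
    have hA : #(A ∩ l) ≠ 3 := fun h => (hsplit l hl).1 <| inter_eq_right.1 <|
      eq_of_subset_of_card_le inter_subset_right (by rw [h, hL3 l hl])
    have hAc : #(Aᶜ ∩ l) ≠ 3 := fun h => (hsplit l hl).2 <| inter_eq_right.1 <|
      eq_of_subset_of_card_le inter_subset_right (by rw [h, hL3 l hl])
    have : #(A ∩ l) ≤ 3 := by omega
    have : #(Aᶜ ∩ l) ≤ 3 := by omega
    interval_cases #(A ∩ l) <;> interval_cases #(Aᶜ ∩ l) <;> omega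
  have htotal : #A * (#A - 1) + #Aᶜ * (#Aᶜ - 1) = 7 * 2 := by
    rw [← sum_card_inter_mul_pred_of_existsUnique hpoints A,
      ← sum_card_inter_mul_pred_of_existsUnique hpoints Aᶜ, ← sum_add_distrib,
      sum_congr rfl hline, sum_const, hL7, smul_eq_mul]
  rw [card_compl, hα] at htotal
  have : #A ≤ 7 := hα ▸ card_le_univ A
  interval_cases #A <;> omega

/-- If `L` is the family of lines of a Fano plane on `[7]` (a Steiner system
`S(2,3,7)`), then the family of complements of the lines is a 4-uniform
`B₄`-saturated hypergraph on 7 vertices with exactly 7 hyperedges.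
Hence `sat₄(7, B₄) ≤ 7`. -/
theorem stmt7 (L : Finset (Finset (Fin 7)))
    (hL7 : L.card = 7)
    (hL3 : ∀ l ∈ L, l.card = 3)
    (hlines : ∀ l ∈ L, ∀ m ∈ L, l ≠ m → (l ∩ m).card = 1)
    (hpoints : ∀ p q : Fin 7, p ≠ q → ∃! l, l ∈ L ∧ p ∈ l ∧ q ∈ l) :
    (∀ e ∈ L.image (·ᶜ), Finset.card e = 4) ∧
    (L.image (·ᶜ)).card = 7 ∧
    (∀ e ∈ L.image (·ᶜ), ∀ f ∈ L.image (·ᶜ), e ≠ f → (e ∩ f).card ≠ 1) ∧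
    (∀ A : Finset (Fin 7), A.card = 4 → A ∉ L.image (·ᶜ) →
      ∃ e ∈ L.image (·ᶜ), (A ∩ e).card = 1) := by
  refine ⟨?_, ?_, ?_, ?_⟩
  · simp only [forall_mem_image]
    intro l hl
    rw [card_compl, hL3 l hl, Fintype.card_fin]
  · rw [card_image_of_injective _ compl_injective, hL7]
  · simp only [forall_mem_image]
    intro l hl m hm hne
    have hunion := card_union_add_card_inter l m
    rw [hL3 l hl, hL3 m hm, hlines l hl m hm (ne_of_apply_ne _ hne)] at hunion
    rw [← compl_union, card_compl, Fintype.card_fin]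
    omega
  · intro A hA hAL
    obtain ⟨l, hl, hlA | hlAc⟩ :=
      Fano.exists_subset_or_subset_compl (Fintype.card_fin 7) hL7 hL3 hpoints A
    · refine ⟨lᶜ, mem_image_of_mem _ hl, ?_⟩
      rw [← sdiff_eq_inter_compl, card_sdiff_of_subset hlA, hA, hL3 l hl]
    · have hl_eq : l = Aᶜ := eq_of_subset_of_card_le hlAc <| by
        rw [card_compl, hA, hL3 l hl, Fintype.card_fin]
      exact absurd (mem_image.2 ⟨l, hl, by rw [hl_eq, compl_compl]⟩) hAL
end

section
/- If H_1 on vertex set V_1 and H_2 on vertex set V_2 (disjoint, each with at least one hyperedge) are both B_4-saturated and B_4-free, and at most one of them contains a pair of twin vertices, then their disjoint union H_1 ∪ H_2 is B_4-free; moreover H_1 ∪ H_2 is B_4-saturated if and only if for every 4-set A meeting both V_1 and V_2 and not in E(H_1)∪E(H_2), A intersects some hyperedge in exactly one vertex. -/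
/-- Disjoint unions of `B₄`-saturated hypergraphs: if `H₁` on `V₁` and `H₂` on
`V₂` (disjoint, each with at least one hyperedge) are `B₄`-free and
`B₄`-saturated, and at most one of them contains a pair of twin vertices, then
the disjoint union is `B₄`-free, and it is `B₄`-saturated iff every missing
4-set meeting both sides intersects some hyperedge in exactly one vertex. -/
theorem stmt10 {V : Type*} [DecidableEq V]
    (V1 V2 : Finset V) (hdisj : Disjoint V1 V2)
    (E1 E2 : Finset (Finset V)) (hne1 : E1.Nonempty) (hne2 : E2.Nonempty)
    (hsub1 : ∀ e ∈ E1, e ⊆ V1) (hsub2 : ∀ e ∈ E2, e ⊆ V2)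
    (hu1 : ∀ e ∈ E1, e.card = 4) (hu2 : ∀ e ∈ E2, e.card = 4)
    (hfree1 : ∀ e ∈ E1, ∀ f ∈ E1, e ≠ f → (e ∩ f).card ≠ 1)
    (hfree2 : ∀ e ∈ E2, ∀ f ∈ E2, e ≠ f → (e ∩ f).card ≠ 1)
    (hsat1 : ∀ A ⊆ V1, A.card = 4 → A ∉ E1 → ∃ e ∈ E1, (A ∩ e).card = 1)
    (hsat2 : ∀ A ⊆ V2, A.card = 4 → A ∉ E2 → ∃ e ∈ E2, (A ∩ e).card = 1)
    (htwin : ¬ ((∃ a ∈ V1, ∃ b ∈ V1, a ≠ b ∧ ∀ e ∈ E1, (a ∈ e ↔ b ∈ e)) ∧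
        (∃ a ∈ V2, ∃ b ∈ V2, a ≠ b ∧ ∀ e ∈ E2, (a ∈ e ↔ b ∈ e)))) :
    (∀ e ∈ E1 ∪ E2, ∀ f ∈ E1 ∪ E2, e ≠ f → (e ∩ f).card ≠ 1) ∧
    ((∀ A ⊆ V1 ∪ V2, A.card = 4 → A ∉ E1 ∪ E2 → ∃ e ∈ E1 ∪ E2, (A ∩ e).card = 1) ↔
      (∀ A ⊆ V1 ∪ V2, A.card = 4 → (A ∩ V1).Nonempty → (A ∩ V2).Nonempty →
        A ∉ E1 ∪ E2 → ∃ e ∈ E1 ∪ E2, (A ∩ e).card = 1)) := by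
  constructor
  · intro e he f hf hef
    simp only [Finset.mem_union] at he hf
    rcases he with he | he <;> rcases hf with hf | hf
    · exact hfree1 e he f hf hef
    · have h0 : e ∩ f = ∅ := Finset.eq_empty_of_forall_notMem fun x hx => by
        simp only [Finset.mem_inter] at hx
        exact Finset.disjoint_left.mp hdisj (hsub1 e he hx.1) (hsub2 f hf hx.2)
      simp [h0]
    · have h0 : e ∩ f = ∅ := Finset.eq_empty_of_forall_notMem fun x hx => by
        simp only [Finset.mem_inter] at hx
        exact Finset.disjoint_left.mp hdisj (hsub1 f hf hx.2) (hsub2 e he hx.1)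
      simp [h0]
    · exact hfree2 e he f hf hef
  · constructor
    · intro h A hA hc _ _ hnA
      exact h A hA hc hnA
    · intro h A hA hc hnA
      by_cases h1 : (A ∩ V1).Nonempty
      · by_cases h2 : (A ∩ V2).Nonempty
        · exact h A hA hc h1 h2 hnA
        · have hsubA : A ⊆ V1 := fun x hx => by
            rcases Finset.mem_union.mp (hA hx) with hh | hh
            · exact hh
            · exact absurd ⟨x, Finset.mem_inter.mpr ⟨hx, hh⟩⟩ h2
          obtain ⟨e, he, hce⟩ := hsat1 A hsubA hc
            (fun hmem => hnA (Finset.mem_union_left _ hmem))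
          exact ⟨e, Finset.mem_union_left _ he, hce⟩
      · have hsubA : A ⊆ V2 := fun x hx => by
          rcases Finset.mem_union.mp (hA hx) with hh | hh
          · exact absurd ⟨x, Finset.mem_inter.mpr ⟨hx, hh⟩⟩ h1
          · exact hh
        obtain ⟨e, he, hce⟩ := hsat2 A hsubA hc
          (fun hmem => hnA (Finset.mem_union_right _ hmem))
        exact ⟨e, Finset.mem_union_right _ he, hce⟩
end

section
/- Let H be a B_4-saturated (B_4-free and maximal) 4-uniform hypergraph. If {a,b} and {c,d} are two distinct pairs of twin vertices of H with {a,b} ∩ {c,d} = ∅, then {a,b,c,d} ∈ E(H). -/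
/-- In a `B₄`-saturated 4-uniform hypergraph, the union of two disjoint pairs of
twin vertices is a hyperedge. -/
theorem stmt14 {V : Type*} [Fintype V] [DecidableEq V] (E : Finset (Finset V))
    (huniform : ∀ e ∈ E, e.card = 4)
    (hfree : ∀ e ∈ E, ∀ f ∈ E, e ≠ f → (e ∩ f).card ≠ 1)
    (hsat : ∀ A : Finset V, A.card = 4 → A ∉ E → ∃ e ∈ E, (A ∩ e).card = 1)
    (a b c d : V) (hab : a ≠ b) (hcd : c ≠ d)
    (hdisj : Disjoint ({a, b} : Finset V) ({c, d} : Finset V))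
    (htab : ∀ e ∈ E, (a ∈ e ↔ b ∈ e)) (htcd : ∀ e ∈ E, (c ∈ e ↔ d ∈ e)) :
    ({a, b, c, d} : Finset V) ∈ E := by
  rw [Finset.disjoint_left] at hdisj
  have hac : a ≠ c := fun h => hdisj (Finset.mem_insert_self a {b}) (by simp [h])
  have had : a ≠ d := fun h => hdisj (Finset.mem_insert_self a {b}) (by simp [h])
  have hbc : b ≠ c := fun h =>
    hdisj (Finset.mem_insert_of_mem (Finset.mem_singleton_self b)) (by simp [h])
  have hbd : b ≠ d := fun h =>
    hdisj (Finset.mem_insert_of_mem (Finset.mem_singleton_self b)) (by simp [h])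
  have hA : ({a, b, c, d} : Finset V).card = 4 := by
    rw [Finset.card_insert_of_notMem (by simp [hab, hac, had]),
        Finset.card_insert_of_notMem (by simp [hbc, hbd]),
        Finset.card_insert_of_notMem (by simp [hcd]), Finset.card_singleton]
  by_contra h
  obtain ⟨e, he, hcard⟩ := hsat _ hA h
  have ha := htab e he
  have hc := htcd e he
  by_cases hae : a ∈ e <;> by_cases hce : c ∈ e
  · have : ({a, b, c, d} : Finset V) ∩ e = {a, b, c, d} := by
      apply Finset.inter_eq_left.mpr
      simp [Finset.insert_subset_iff, hae, ha.mp hae, hce, hc.mp hce]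
    rw [this, hA] at hcard; omega
  · have : ({a, b, c, d} : Finset V) ∩ e = {a, b} := by
      ext x
      simp only [Finset.mem_inter, Finset.mem_insert, Finset.mem_singleton]
      constructor
      · rintro ⟨h1 | h1 | h1 | h1, h2⟩ <;> subst h1 <;> simp_all
      · rintro (h1 | h1) <;> subst h1 <;> simp_all
    rw [this, Finset.card_insert_of_notMem (by simp [hab]),
        Finset.card_singleton] at hcard; omega
  · have : ({a, b, c, d} : Finset V) ∩ e = {c, d} := by
      ext x
      simp only [Finset.mem_inter, Finset.mem_insert, Finset.mem_singleton]
      constructor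
      · rintro ⟨h1 | h1 | h1 | h1, h2⟩ <;> subst h1 <;> simp_all
      · rintro (h1 | h1) <;> subst h1 <;> simp_all
    rw [this, Finset.card_insert_of_notMem (by simp [hcd]),
        Finset.card_singleton] at hcard; omega
  · have : ({a, b, c, d} : Finset V) ∩ e = ∅ := by
      ext x
      simp only [Finset.mem_inter, Finset.mem_insert, Finset.mem_singleton,
        Finset.notMem_empty, iff_false, not_and]
      rintro (h1 | h1 | h1 | h1) <;> subst h1 <;> simp_all
    rw [this, Finset.card_empty] at hcard; omega
end

section
/- Any 4-uniform B_4-semi-saturated hypergraph H has at most 3 'special' hyperedges, where a hyperedge is special if it contains a pair of twin vertices each of degree at most 2. More precisely: if H is B_4-semi-saturated, then there do not exist 4 distinct special hyperedges, since for any two disjoint twin pairs {a,b},{c,d} of degree ≤ 2 vertices, {a,b,c,d} must be a hyperedge of H. -/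
/-- A hyperedge of `E` is special if it contains a pair of twin vertices each of
degree at most 2. -/
def SpecialEdge {V : Type*} [DecidableEq V] (E : Finset (Finset V))
    (e : Finset V) : Prop :=
  ∃ a ∈ e, ∃ b ∈ e, a ≠ b ∧ (∀ f ∈ E, (a ∈ f ↔ b ∈ f)) ∧
    (E.filter (fun f => a ∈ f)).card ≤ 2

section Aux

variable {V : Type*} [DecidableEq V]

/-- Data of a special edge: a twin pair `a ≠ b` inside an edge `e`, with `a` of
degree at most 2. -/
structure PD (E : Finset (Finset V)) where
  a : V
  b : V
  e : Finset V
  he : e ∈ E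
  hae : a ∈ e
  hab : a ≠ b
  twin : ∀ f ∈ E, (a ∈ f ↔ b ∈ f)
  deg : (E.filter fun f => a ∈ f).card ≤ 2

variable {E : Finset (Finset V)}

/-- Two pair-data are "equivalent" if their distinguished vertices are twins. -/
def Tw (p q : PD E) : Prop := ∀ f ∈ E, (p.a ∈ f ↔ q.a ∈ f)

lemma Tw.symm {p q : PD E} (h : Tw p q) : Tw q p := fun f hf => (h f hf).symm

lemma Tw.trans {p q r : PD E} (h1 : Tw p q) (h2 : Tw q r) : Tw p r :=
  fun f hf => (h1 f hf).trans (h2 f hf)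

/-- A vertex of degree ≤ 2 cannot lie in three pairwise distinct edges. -/
lemma deg3 (p : PD E) {x y z : Finset V} (hx : x ∈ E) (hy : y ∈ E) (hz : z ∈ E)
    (hax : p.a ∈ x) (hay : p.a ∈ y) (haz : p.a ∈ z)
    (hxy : x ≠ y) (hxz : x ≠ z) (hyz : y ≠ z) : False := by
  have hsub : ({x, y, z} : Finset (Finset V)) ⊆ E.filter (fun f => p.a ∈ f) := by
    intro f hf
    simp only [Finset.mem_insert, Finset.mem_singleton] at hf
    rcases hf with rfl | rfl | rfl <;> simp [Finset.mem_filter, *]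
  have hcard : ({x, y, z} : Finset (Finset V)).card = 3 := by
    rw [Finset.card_insert_of_notMem (by simp [hxy, hxz]),
      Finset.card_insert_of_notMem (by simp [hyz]), Finset.card_singleton]
  have h1 := Finset.card_le_card hsub
  have h2 := p.deg
  omega

/-- Non-twin pairs are disjoint. -/
lemma nTw_ne {p q : PD E} (h : ¬ Tw p q) :
    p.a ≠ q.a ∧ p.a ≠ q.b ∧ p.b ≠ q.a ∧ p.b ≠ q.b := by
  refine ⟨?_, ?_, ?_, ?_⟩ <;> intro he <;> apply h <;> intro f hf
  · rw [he]
  · rw [he]; exact (q.twin f hf).symm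
  · rw [← he]; exact p.twin f hf
  · exact (p.twin f hf).trans (by rw [he]; exact (q.twin f hf).symm)

/-- The union of two non-twin twin-pairs must be a hyperedge: no edge can meet
it in exactly one vertex, since edges contain twins together. -/
lemma unionMem
    (hsem : ∀ A : Finset V, A.card = 4 → A ∉ E → ∃ g ∈ E, (A ∩ g).card = 1)
    (p q : PD E) (h : ¬ Tw p q) : ({p.a, p.b, q.a, q.b} : Finset V) ∈ E := by
  obtain ⟨h1, h2, h3, h4⟩ := nTw_ne h
  have hcard : ({p.a, p.b, q.a, q.b} : Finset V).card = 4 := by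
    rw [Finset.card_insert_of_notMem (by simp [p.hab, h1, h2]),
      Finset.card_insert_of_notMem (by simp [h3, h4]),
      Finset.card_insert_of_notMem (by simp [q.hab]), Finset.card_singleton]
  by_contra hAE
  obtain ⟨g, hgE, hg⟩ := hsem _ hcard hAE
  obtain ⟨x, hx⟩ := Finset.card_eq_one.mp hg
  have key : ∀ y, y ∈ ({p.a, p.b, q.a, q.b} : Finset V) → y ∈ g → y = x := fun y hy hyg =>
    Finset.mem_singleton.mp (hx ▸ Finset.mem_inter.mpr ⟨hy, hyg⟩)
  have hxmem : x ∈ ({p.a, p.b, q.a, q.b} : Finset V) ∩ g := hx ▸ Finset.mem_singleton_self x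
  obtain ⟨hxA, hxg⟩ := Finset.mem_inter.mp hxmem
  simp only [Finset.mem_insert, Finset.mem_singleton] at hxA
  rcases hxA with rfl | rfl | rfl | rfl
  · exact p.hab (key p.b (by simp) ((p.twin g hgE).mp hxg)).symm
  · exact p.hab (key p.a (by simp) ((p.twin g hgE).mpr hxg))
  · exact q.hab (key q.b (by simp) ((q.twin g hgE).mp hxg)).symm
  · exact q.hab (key q.a (by simp) ((q.twin g hgE).mpr hxg))

/-- Unions with distinct non-twin partners are distinct. -/
lemma Udistinct {p q r : PD E} (hpq : ¬ Tw p q) (hpr : ¬ Tw p r) (hqr : ¬ Tw q r) :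
    ({p.a, p.b, q.a, q.b} : Finset V) ≠ ({p.a, p.b, r.a, r.b} : Finset V) := by
  intro h
  have hq : q.a ∈ ({p.a, p.b, r.a, r.b} : Finset V) := h ▸ (by simp)
  obtain ⟨h1, h2, h3, h4⟩ := nTw_ne hpq
  obtain ⟨h5, h6, h7, h8⟩ := nTw_ne hqr
  simp only [Finset.mem_insert, Finset.mem_singleton] at hq
  rcases hq with hq | hq | hq | hq
  · exact h1 hq.symm
  · exact h3 hq.symm
  · exact h5 hq
  · exact h6 hq

/-- Pattern: two pairs in one twin class with a third edge. -/
lemma L0 (p q r : PD E) (hpq : Tw p q) (hpr : Tw p r)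
    (h1 : p.e ≠ q.e) (h2 : p.e ≠ r.e) (h3 : q.e ≠ r.e) : False :=
  deg3 p p.he q.he r.he p.hae ((hpq q.e q.he).mpr q.hae) ((hpr r.e r.he).mpr r.hae) h1 h2 h3

/-- Pattern 2+2: twin classes `{p,q}` and `{r,s}`. -/
lemma L3
    (hsem : ∀ A : Finset V, A.card = 4 → A ∉ E → ∃ g ∈ E, (A ∩ g).card = 1)
    (p q r s : PD E) (hpq : Tw p q) (hrs : Tw r s) (hpr : ¬ Tw p r)
    (d1 : p.e ≠ q.e) (d2 : p.e ≠ r.e) (d3 : p.e ≠ s.e)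
    (d4 : q.e ≠ r.e) (d5 : q.e ≠ s.e) (d6 : r.e ≠ s.e) : False := by
  have hU : ({r.a, r.b, p.a, p.b} : Finset V) ∈ E :=
    unionMem hsem r p (fun h => hpr h.symm)
  have hpaU : p.a ∈ ({r.a, r.b, p.a, p.b} : Finset V) := by simp
  have hUre : ({r.a, r.b, p.a, p.b} : Finset V) ≠ r.e := by
    intro h
    exact deg3 p p.he q.he r.he p.hae ((hpq q.e q.he).mpr q.hae) (h ▸ hpaU) d1 d2 d4
  have hUse : ({r.a, r.b, p.a, p.b} : Finset V) ≠ s.e := by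
    intro h
    exact deg3 p p.he q.he s.he p.hae ((hpq q.e q.he).mpr q.hae) (h ▸ hpaU) d1 d3 d5
  exact deg3 r r.he s.he hU r.hae ((hrs s.e s.he).mpr s.hae) (by simp)
    d6 (Ne.symm hUre) (Ne.symm hUse)

/-- Pattern 2+1+1: twin class `{p,q}`, singletons `r`, `s`. -/
lemma L2
    (hsem : ∀ A : Finset V, A.card = 4 → A ∉ E → ∃ g ∈ E, (A ∩ g).card = 1)
    (p q r s : PD E) (hpq : Tw p q) (hpr : ¬ Tw p r) (hps : ¬ Tw p s) (hrs : ¬ Tw r s)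
    (d1 : p.e ≠ q.e) (d2 : p.e ≠ r.e) (d3 : p.e ≠ s.e)
    (d4 : q.e ≠ r.e) (d5 : q.e ≠ s.e) (d6 : r.e ≠ s.e) : False := by
  have hrp : ¬ Tw r p := fun h => hpr h.symm
  have hsp : ¬ Tw s p := fun h => hps h.symm
  have hU1 : ({r.a, r.b, p.a, p.b} : Finset V) ∈ E := unionMem hsem r p hrp
  have hU2 : ({r.a, r.b, s.a, s.b} : Finset V) ∈ E := unionMem hsem r s hrs
  have hU3 : ({s.a, s.b, p.a, p.b} : Finset V) ∈ E := unionMem hsem s p hsp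
  have hU12 : ({r.a, r.b, p.a, p.b} : Finset V) ≠ ({r.a, r.b, s.a, s.b} : Finset V) :=
    Udistinct hrp hrs hps
  have hU1re : ({r.a, r.b, p.a, p.b} : Finset V) ≠ r.e := by
    intro h
    have hpa : p.a ∈ r.e := h ▸ (by simp)
    exact deg3 p p.he q.he r.he p.hae ((hpq q.e q.he).mpr q.hae) hpa d1 d2 d4
  have hU2re : ({r.a, r.b, s.a, s.b} : Finset V) ≠ r.e := by
    intro h
    have hsa : s.a ∈ r.e := h ▸ (by simp)
    have hU3se : ({s.a, s.b, p.a, p.b} : Finset V) ≠ s.e := by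
      intro h'
      have hpa : p.a ∈ s.e := h' ▸ (by simp)
      exact deg3 p p.he q.he s.he p.hae ((hpq q.e q.he).mpr q.hae) hpa d1 d3 d5
    have hU3re : ({s.a, s.b, p.a, p.b} : Finset V) ≠ r.e := by
      intro h'
      have hpa : p.a ∈ r.e := h' ▸ (by simp)
      exact deg3 p p.he q.he r.he p.hae ((hpq q.e q.he).mpr q.hae) hpa d1 d2 d4
    exact deg3 s s.he r.he hU3 s.hae hsa (by simp) (Ne.symm d6) (Ne.symm hU3se) (Ne.symm hU3re)
  exact deg3 r r.he hU1 hU2 r.hae (by simp) (by simp)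
    (Ne.symm hU1re) (Ne.symm hU2re) hU12

/-- Pattern 1+1+1+1: all four pairs in distinct twin classes. -/
lemma L1
    (hsem : ∀ A : Finset V, A.card = 4 → A ∉ E → ∃ g ∈ E, (A ∩ g).card = 1)
    (p q r s : PD E) (hpq : ¬ Tw p q) (hpr : ¬ Tw p r) (hps : ¬ Tw p s)
    (hqr : ¬ Tw q r) (hqs : ¬ Tw q s) (hrs : ¬ Tw r s) : False := by
  have hU1 : ({p.a, p.b, q.a, q.b} : Finset V) ∈ E := unionMem hsem p q hpq
  have hU2 : ({p.a, p.b, r.a, r.b} : Finset V) ∈ E := unionMem hsem p r hpr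
  have hU3 : ({p.a, p.b, s.a, s.b} : Finset V) ∈ E := unionMem hsem p s hps
  exact deg3 p hU1 hU2 hU3 (by simp) (by simp) (by simp)
    (Udistinct hpq hpr hqr) (Udistinct hpq hps hqs) (Udistinct hpr hps hrs)

end Aux

/-- A `B₄`-semi-saturated 4-uniform hypergraph has at most 3 special hyperedges:
there do not exist 4 distinct special hyperedges. -/
theorem stmt15 {V : Type*} [Fintype V] [DecidableEq V] (E : Finset (Finset V))
    (huniform : ∀ e ∈ E, e.card = 4)
    (hsemisat : ∀ A : Finset V, A.card = 4 → A ∉ E → ∃ e ∈ E, (A ∩ e).card = 1) :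
    ¬ ∃ e1 e2 e3 e4, e1 ∈ E ∧ e2 ∈ E ∧ e3 ∈ E ∧ e4 ∈ E ∧
      e1 ≠ e2 ∧ e1 ≠ e3 ∧ e1 ≠ e4 ∧ e2 ≠ e3 ∧ e2 ≠ e4 ∧ e3 ≠ e4 ∧
      SpecialEdge E e1 ∧ SpecialEdge E e2 ∧ SpecialEdge E e3 ∧ SpecialEdge E e4 := by
  rintro ⟨e1, e2, e3, e4, he1, he2, he3, he4, h12, h13, h14, h23, h24, h34, s1, s2, s3, s4⟩
  obtain ⟨a1, ha1, b1, hb1, hab1, htw1, hdeg1⟩ := s1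
  obtain ⟨a2, ha2, b2, hb2, hab2, htw2, hdeg2⟩ := s2
  obtain ⟨a3, ha3, b3, hb3, hab3, htw3, hdeg3⟩ := s3
  obtain ⟨a4, ha4, b4, hb4, hab4, htw4, hdeg4⟩ := s4
  let p1 : PD E := ⟨a1, b1, e1, he1, ha1, hab1, htw1, hdeg1⟩
  let p2 : PD E := ⟨a2, b2, e2, he2, ha2, hab2, htw2, hdeg2⟩
  let p3 : PD E := ⟨a3, b3, e3, he3, ha3, hab3, htw3, hdeg3⟩
  let p4 : PD E := ⟨a4, b4, e4, he4, ha4, hab4, htw4, hdeg4⟩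
  by_cases t12 : Tw p1 p2
  · by_cases t13 : Tw p1 p3
    · exact L0 p1 p2 p3 t12 t13 h12 h13 h23
    by_cases t14 : Tw p1 p4
    · exact L0 p1 p2 p4 t12 t14 h12 h14 h24
    by_cases t34 : Tw p3 p4
    · exact L3 hsemisat p1 p2 p3 p4 t12 t34 t13 h12 h13 h14 h23 h24 h34
    · exact L2 hsemisat p1 p2 p3 p4 t12 t13 t14 t34 h12 h13 h14 h23 h24 h34
  · by_cases t13 : Tw p1 p3
    · by_cases t14 : Tw p1 p4
      · exact L0 p1 p3 p4 t13 t14 h13 h14 h34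
      by_cases t24 : Tw p2 p4
      · exact L3 hsemisat p1 p3 p2 p4 t13 t24 t12 h13 h12 h14 (Ne.symm h23) h34 h24
      · exact L2 hsemisat p1 p3 p2 p4 t13 t12 t14 t24 h13 h12 h14 (Ne.symm h23) h34 h24
    · by_cases t14 : Tw p1 p4
      · by_cases t23 : Tw p2 p3
        · exact L3 hsemisat p1 p4 p2 p3 t14 t23 t12 h14 h12 h13 (Ne.symm h24) (Ne.symm h34) h23
        · exact L2 hsemisat p1 p4 p2 p3 t14 t12 t13 t23 h14 h12 h13 (Ne.symm h24) (Ne.symm h34) h23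
      · by_cases t23 : Tw p2 p3
        · by_cases t24 : Tw p2 p4
          · exact L0 p2 p3 p4 t23 t24 h23 h24 h34
          · exact L2 hsemisat p2 p3 p1 p4 t23 (fun h => t12 h.symm) t24 t14
              h23 (Ne.symm h12) h24 (Ne.symm h13) h34 h14
        · by_cases t24 : Tw p2 p4
          · by_cases t34 : Tw p3 p4
            · exact L0 p4 p2 p3 t24.symm t34.symm (Ne.symm h24) (Ne.symm h34) h23
            · exact L2 hsemisat p2 p4 p1 p3 t24 (fun h => t12 h.symm) t23 t13
                h24 (Ne.symm h12) h23 (Ne.symm h14) (Ne.symm h34) h13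
          · by_cases t34 : Tw p3 p4
            · exact L2 hsemisat p3 p4 p1 p2 t34 (fun h => t13 h.symm) (fun h => t23 h.symm) t12
                h34 (Ne.symm h13) (Ne.symm h23) (Ne.symm h14) (Ne.symm h24) h12
            · exact L1 hsemisat p1 p2 p3 p4 t12 t13 t14 t23 t24 t34
end
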